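/- For every positive integer n, the derivative of the Riemann zeta function satisfies ζ'(−2n) = (−1)^n · (2n)! · ζ(2n+1) / (2 · (2π)^{2n}). -/

import Mathlib

open Real

/-!
Differentiate the functional equation `ζ(1 - s) = 2 (2π)^(-s) Γ(s) cos(πs/2) ζ(s)` at the odd
integer `s = 2n + 1`. There `cos(πs/2)` vanishes, so by the product rule only the term in which
the cosine is differentiated survives; the remaining factors are evaluated with
`Γ(2n + 1) = (2n)!` and `sin(π(2n + 1)/2) = (-1)^n`.
-/

open Complex Filter Topology

theorem HasDerivAt.mul_of_eq_zero_right {𝕜 𝔸 : Type*} [NontriviallyNormedField 𝕜] [NormedRing 𝔸]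
    [NormedAlgebra 𝕜 𝔸] {f g : 𝕜 → 𝔸} {f' g' : 𝔸} {x : 𝕜} (hf : HasDerivAt f f' x)
    (hg : HasDerivAt g g' x) (hgx : g x = 0) :
    HasDerivAt (fun y => f y * g y) (f x * g') x := by
  simpa [hgx] using hf.fun_mul hg

namespace Complex

theorem cos_nat_mul_pi (n : ℕ) : cos (n * π) = (-1) ^ n := by
  exact_mod_cast congrArg ofReal (Real.cos_nat_mul_pi n)

theorem cos_pi_mul_two_mul_add_one_div_two (n : ℕ) : cos (π * (2 * n + 1) / 2) = 0 := by
  rw [show (π : ℂ) * (2 * n + 1) / 2 = n * π + π / 2 by ring, cos_add_pi_div_two, sin_nat_mul_pi,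
    neg_zero]

theorem sin_pi_mul_two_mul_add_one_div_two (n : ℕ) : sin (π * (2 * n + 1) / 2) = (-1) ^ n := by
  rw [show (π : ℂ) * (2 * n + 1) / 2 = n * π + π / 2 by ring, sin_add_pi_div_two, cos_nat_mul_pi]

end Complex

theorem riemannZeta_one_sub_eventuallyEq {s₀ : ℂ} (hs₀ : 1 < s₀.re) :
    (fun s => riemannZeta (1 - s)) =ᶠ[𝓝 s₀]
      fun s => (2 * (2 * π) ^ (-s) * Gamma s * riemannZeta s) * cos (π * s / 2) := by
  filter_upwards [(isOpen_lt continuous_const continuous_re).mem_nhds hs₀] with s hs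
  rw [riemannZeta_one_sub (fun m hm => ?_) (fun h1 => ?_)]
  · ring
  · simp only [hm, neg_re, natCast_re] at hs
    linarith [m.cast_nonneg (α := ℝ)]
  · simp [h1] at hs

theorem deriv_riemannZeta_one_sub_of_cos_eq_zero {s : ℂ} (hs : 1 < s.re)
    (hcos : cos (π * s / 2) = 0) :
    deriv riemannZeta (1 - s) = π * (2 * π) ^ (-s) * Gamma s * sin (π * s / 2) * riemannZeta s := by
  have hs_ne_one : s ≠ 1 := by rintro rfl; simp at hs
  have hfactor :
      DifferentiableAt ℂ (fun s : ℂ => 2 * (2 * π) ^ (-s) * Gamma s * riemannZeta s) s :=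
    (((differentiableAt_const _).mul
      ((differentiableAt_id.neg).const_cpow (c := 2 * π) (Or.inl (by simp [pi_ne_zero]))))
      |>.mul (differentiableAt_Gamma s fun m hm => by simp [hm] at hs; linarith)).mul
      (differentiableAt_riemannZeta hs_ne_one)
  have hcos' : HasDerivAt (fun s : ℂ => cos (π * s / 2)) (-sin (π * s / 2) * (π / 2)) s := by
    simpa using (((hasDerivAt_id s).const_mul (π : ℂ)).div_const 2).ccos
  calc deriv riemannZeta (1 - s) = -deriv (fun s : ℂ => riemannZeta (1 - s)) s := by
        rw [deriv_comp_const_sub, neg_neg]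
    _ = -(2 * (2 * π) ^ (-s) * Gamma s * riemannZeta s * (-sin (π * s / 2) * (π / 2))) := by
        rw [(riemannZeta_one_sub_eventuallyEq hs).deriv_eq,
          (hfactor.hasDerivAt.mul_of_eq_zero_right hcos' hcos).deriv]
    _ = π * (2 * π) ^ (-s) * Gamma s * sin (π * s / 2) * riemannZeta s := by ring

/-- For every positive integer `n`, the derivative of the Riemann zeta
function satisfies `ζ'(-2n) = (-1)^n (2n)! ζ(2n+1) / (2 (2π)^(2n))`. -/
theorem riemannZeta_deriv_neg_even (n : ℕ) (hn : 0 < n) :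
    deriv riemannZeta (-(2 * (n : ℂ))) =
      (-1) ^ n * (Nat.factorial (2 * n) : ℂ) * riemannZeta (2 * (n : ℂ) + 1) /
        (2 * (2 * (π : ℂ)) ^ (2 * n)) := by
  have hre : 1 < (2 * (n : ℂ) + 1).re := by simpa using hn
  have hΓ : Complex.Gamma (2 * n + 1) = (2 * n).factorial := by
    exact_mod_cast Complex.Gamma_nat_eq_factorial (2 * n)
  have hpow : (2 * π : ℂ) ^ (-(2 * (n : ℂ) + 1)) = ((2 * (π : ℂ)) ^ (2 * n) * (2 * π))⁻¹ := by
    rw [cpow_neg, ← pow_succ]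
    norm_cast
  have h := deriv_riemannZeta_one_sub_of_cos_eq_zero hre (cos_pi_mul_two_mul_add_one_div_two n)
  rw [show 1 - (2 * (n : ℂ) + 1) = -(2 * n) by ring, hpow, hΓ,
    sin_pi_mul_two_mul_add_one_div_two] at h
  rw [h]
  field_simp
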